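/- arXiv:1904.05697 — 3 statements merged into one kernel-verified Lean document; each statement's English description precedes it below -/
import Mathlib

section
/- In the exact WKB recursion the following holds: for every compact convex set K ⊆ Ω containing z₀, setting L = diam(K) and A_K = (sup_{ζ∈K}|ℋ(ζ)|)·max(1, e^{2L/ε}), there is a constant C>0 such that |w^±_n(z)| ≤ C (A_K L)^n / n! for all z∈K and all n≥0; consequently the series Σ_{n≥0} w^±_{2n} and Σ_{n≥0} w^±_{2n+1} converge absolutely and uniformly on K. -/
open Complex Filter Set intervalIntegral

noncomputable section

/-- The exact WKB recursion: `w 0 ≡ 1`; for odd index `2k+1`,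
`w_{2k+1}(z) = ∫_{[z₀,z]} e^{s·2(ζ-z)/ε} ℋ(ζ) w_{2k}(ζ) dζ`, and for even index
`2k+2`, `w_{2k+2}(z) = ∫_{[z₀,z]} ℋ(ζ) w_{2k+1}(ζ) dζ`, all integrals along the
straight segment from `z₀` to `z` (parameterized by `t ∈ [0,1]`); the sign `±`
is encoded by `s = 1` or `s = -1`. -/
def wkbW (H : ℂ → ℂ) (z₀ : ℂ) (ε : ℝ) (s : ℂ) : ℕ → ℂ → ℂ
  | 0 => fun _ => 1
  | n + 1 => fun z =>
      if n % 2 = 0 then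
        (z - z₀) * ∫ t in (0:ℝ)..1,
          Complex.exp (s * 2 * ((z₀ + (t : ℂ) * (z - z₀)) - z) / (ε : ℂ)) *
            H (z₀ + (t : ℂ) * (z - z₀)) * wkbW H z₀ ε s n (z₀ + (t : ℂ) * (z - z₀))
      else
        (z - z₀) * ∫ t in (0:ℝ)..1,
          H (z₀ + (t : ℂ) * (z - z₀)) * wkbW H z₀ ε s n (z₀ + (t : ℂ) * (z - z₀))

/-! Each step of the recursion integrates, along the segment `[z₀, z]`, the previous term against a
kernel bounded on `K` by `A = sup_K |ℋ| · max(1, e^{2L/ε})`. Since the segment point at parameter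
`t` lies at distance `t |z - z₀|` from `z₀`, induction turns a bound `(A |z - z₀|)^n / n!` into
`A |z - z₀| · ∫₀¹ A^n |z - z₀|^n tⁿ / n! dt = (A |z - z₀|)^{n+1} / (n+1)!`, exactly as for a
Volterra equation. The factorial bound is summable, so the Weierstrass M-test applies. -/

open scoped Nat

theorem Convex.add_ofReal_mul_sub_mem {K : Set ℂ} (hK : Convex ℝ K) {z₀ z : ℂ} (hz₀ : z₀ ∈ K)
    (hz : z ∈ K) {t : ℝ} (ht : t ∈ Icc (0 : ℝ) 1) : z₀ + (t : ℂ) * (z - z₀) ∈ K := by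
  simpa only [Complex.real_smul] using hK.add_smul_sub_mem hz₀ hz ht

theorem norm_integral_zero_one_le_of_norm_le_mul_pow {E : Type*} [NormedAddCommGroup E]
    [NormedSpace ℝ E] {f : ℝ → E} {C : ℝ} (n : ℕ) (hf : ∀ t ∈ Ioc (0 : ℝ) 1, ‖f t‖ ≤ C * t ^ n) :
    ‖∫ t in (0 : ℝ)..1, f t‖ ≤ C / (n + 1) :=
  calc ‖∫ t in (0 : ℝ)..1, f t‖ ≤ ∫ t in (0 : ℝ)..1, C * t ^ n :=
        norm_integral_le_of_norm_le zero_le_one (MeasureTheory.ae_of_all _ hf)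
          ((continuous_const.mul (continuous_pow n)).intervalIntegrable _ _)
    _ = C / (n + 1) := by
        rw [intervalIntegral.integral_const_mul, integral_pow]
        norm_num
        ring

theorem norm_le_pow_div_factorial_of_segment_recursion {K : Set ℂ} (hK : Convex ℝ K) {z₀ : ℂ}
    (hz₀ : z₀ ∈ K) {A : ℝ} (w : ℕ → ℂ → ℂ) (k : ℕ → ℂ → ℂ → ℂ)
    (hk : ∀ n, ∀ z ∈ K, ∀ ζ ∈ K, ‖k n z ζ‖ ≤ A) (hw₀ : ∀ z ∈ K, ‖w 0 z‖ ≤ 1)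
    (hw : ∀ n z, w (n + 1) z = (z - z₀) * ∫ t in (0 : ℝ)..1,
      k n z (z₀ + (t : ℂ) * (z - z₀)) * w n (z₀ + (t : ℂ) * (z - z₀)))
    (n : ℕ) : ∀ z ∈ K, ‖w n z‖ ≤ (A * ‖z - z₀‖) ^ n / n ! := by
  have hA : 0 ≤ A := (norm_nonneg _).trans (hk 0 z₀ hz₀ z₀ hz₀)
  induction n with
  | zero => simpa using hw₀
  | succ n ih =>
    intro z hz
    set r := ‖z - z₀‖
    have hintegrand : ∀ t ∈ Ioc (0 : ℝ) 1,
        ‖k n z (z₀ + (t : ℂ) * (z - z₀)) * w n (z₀ + (t : ℂ) * (z - z₀))‖ ≤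
          A * (A * r) ^ n / n ! * t ^ n := by
      intro t ht
      have hζ := hK.add_ofReal_mul_sub_mem hz₀ hz (Ioc_subset_Icc_self ht)
      have hdist : ‖z₀ + (t : ℂ) * (z - z₀) - z₀‖ = t * r := by
        rw [add_sub_cancel_left, norm_mul, Complex.norm_real, Real.norm_of_nonneg ht.1.le]
      rw [norm_mul]
      calc _ ≤ A * ((A * (t * r)) ^ n / n !) := by
            gcongr
            · exact hk n z hz _ hζ
            · exact hdist ▸ ih _ hζ
        _ = A * (A * r) ^ n / n ! * t ^ n := by ring
    rw [hw, norm_mul]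
    calc r * ‖∫ t in (0 : ℝ)..1, _‖ ≤ r * (A * (A * r) ^ n / n ! / (n + 1)) := by
          gcongr
          exact norm_integral_zero_one_le_of_norm_le_mul_pow n hintegrand
      _ = (A * r) ^ (n + 1) / (n + 1)! := by
          rw [Nat.factorial_succ]
          push_cast
          field_simp
          ring

theorem norm_exp_mul_two_mul_sub_div_le {s : ℂ} (hs : ‖s‖ ≤ 1) {ε L : ℝ} (hε : 0 < ε)
    {z ζ : ℂ} (hL : ‖ζ - z‖ ≤ L) : ‖exp (s * 2 * (ζ - z) / ε)‖ ≤ Real.exp (2 * L / ε) := by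
  refine (norm_exp_le_exp_norm _).trans (Real.exp_le_exp.2 ?_)
  rw [norm_div, norm_mul, norm_mul, Complex.norm_real, Real.norm_of_nonneg hε.le, Complex.norm_two]
  gcongr
  nlinarith [norm_nonneg (ζ - z), norm_nonneg s]

def wkbKernel (H : ℂ → ℂ) (ε : ℝ) (s : ℂ) (n : ℕ) (z ζ : ℂ) : ℂ :=
  (if n % 2 = 0 then exp (s * 2 * (ζ - z) / ε) else 1) * H ζ

theorem wkbW_succ (H : ℂ → ℂ) (z₀ : ℂ) (ε : ℝ) (s : ℂ) (n : ℕ) (z : ℂ) :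
    wkbW H z₀ ε s (n + 1) z = (z - z₀) * ∫ t in (0 : ℝ)..1,
      wkbKernel H ε s n z (z₀ + (t : ℂ) * (z - z₀)) * wkbW H z₀ ε s n (z₀ + (t : ℂ) * (z - z₀)) := by
  by_cases hn : n % 2 = 0 <;> simp [wkbW, wkbKernel, hn]

theorem norm_wkbKernel_le {H : ℂ → ℂ} {ε L M : ℝ} {s : ℂ} (hs : ‖s‖ ≤ 1) (hε : 0 < ε)
    (n : ℕ) {z ζ : ℂ} (hL : ‖ζ - z‖ ≤ L) (hM : ‖H ζ‖ ≤ M) :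
    ‖wkbKernel H ε s n z ζ‖ ≤ M * max 1 (Real.exp (2 * L / ε)) := by
  rw [wkbKernel, norm_mul, mul_comm M]
  gcongr
  split_ifs
  · exact (norm_exp_mul_two_mul_sub_div_le hs hε hL).trans (le_max_right _ _)
  · simp

theorem norm_wkbW_le {H : ℂ → ℂ} {z₀ : ℂ} {ε L M : ℝ} {s : ℂ} (hs : ‖s‖ ≤ 1) (hε : 0 < ε)
    {K : Set ℂ} (hK : Convex ℝ K) (hz₀ : z₀ ∈ K) (hL : ∀ z ∈ K, ∀ ζ ∈ K, ‖ζ - z‖ ≤ L)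
    (hM : ∀ ζ ∈ K, ‖H ζ‖ ≤ M) (n : ℕ) {z : ℂ} (hz : z ∈ K) :
    ‖wkbW H z₀ ε s n z‖ ≤ (M * max 1 (Real.exp (2 * L / ε)) * L) ^ n / n ! := by
  have hA : 0 ≤ M * max 1 (Real.exp (2 * L / ε)) :=
    (norm_nonneg _).trans (norm_wkbKernel_le hs hε 0 (hL z₀ hz₀ z₀ hz₀) (hM z₀ hz₀))
  refine (norm_le_pow_div_factorial_of_segment_recursion hK hz₀ _ (wkbKernel H ε s)
    (fun n z hz ζ hζ => norm_wkbKernel_le hs hε n (hL z hz ζ hζ) (hM ζ hζ))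
    (fun _ _ => by simp [wkbW]) (wkbW_succ H z₀ ε s) n z hz).trans ?_
  gcongr
  exact hL z₀ hz₀ z hz

theorem wkb_series_converges_general
    (Ω : Set ℂ)
    (H : ℂ → ℂ) (hH : DifferentiableOn ℂ H Ω)
    (z₀ : ℂ) (ε : ℝ) (hε : 0 < ε) (s : ℂ) (hs : s = 1 ∨ s = -1)
    (K : Set ℂ) (hK : IsCompact K) (hKconv : Convex ℝ K) (hKΩ : K ⊆ Ω)
    (hz₀K : z₀ ∈ K)
    (L AK : ℝ) (hL : L = Metric.diam K)
    (hAK : AK = sSup ((fun ζ => ‖H ζ‖) '' K) * max 1 (Real.exp (2 * L / ε))) :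
    ∃ C : ℝ, 0 < C ∧
      (∀ n : ℕ, ∀ z ∈ K,
        ‖wkbW H z₀ ε s n z‖ ≤ C * (AK * L) ^ n / n.factorial) ∧
      (∀ z ∈ K, Summable (fun n : ℕ => ‖wkbW H z₀ ε s (2 * n) z‖)) ∧
      (∀ z ∈ K, Summable (fun n : ℕ => ‖wkbW H z₀ ε s (2 * n + 1) z‖)) ∧
      TendstoUniformlyOn
        (fun N z => ∑ n ∈ Finset.range N, wkbW H z₀ ε s (2 * n) z)
        (fun z => ∑' n : ℕ, wkbW H z₀ ε s (2 * n) z) atTop K ∧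
      TendstoUniformlyOn
        (fun N z => ∑ n ∈ Finset.range N, wkbW H z₀ ε s (2 * n + 1) z)
        (fun z => ∑' n : ℕ, wkbW H z₀ ε s (2 * n + 1) z) atTop K := by
  have hs_norm : ‖s‖ ≤ 1 := by rcases hs with rfl | rfl <;> simp
  have hdiam : ∀ z ∈ K, ∀ ζ ∈ K, ‖ζ - z‖ ≤ L := fun z hz ζ hζ => by
    rw [hL, ← dist_eq_norm]
    exact Metric.dist_le_diam_of_mem hK.isBounded hζ hz
  have hsup : ∀ ζ ∈ K, ‖H ζ‖ ≤ sSup ((fun ζ => ‖H ζ‖) '' K) := fun ζ hζ =>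
    le_csSup (hK.bddAbove_image (hH.continuousOn.mono hKΩ).norm) ⟨ζ, hζ, rfl⟩
  have hbound (n : ℕ) (z : ℂ) (hz : z ∈ K) : ‖wkbW H z₀ ε s n z‖ ≤ (AK * L) ^ n / n ! :=
    hAK ▸ norm_wkbW_le hs_norm hε hKconv hz₀K hdiam hsup n hz
  have hsummable : Summable fun n : ℕ => (AK * L) ^ n / n ! := Real.summable_pow_div_factorial _
  have heven := hsummable.comp_injective (mul_right_injective₀ (two_ne_zero : (2 : ℕ) ≠ 0))
  have hodd := hsummable.comp_injective
    ((add_left_injective 1).comp (mul_right_injective₀ (two_ne_zero : (2 : ℕ) ≠ 0)))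
  refine ⟨1, one_pos, fun n z hz => by simpa using hbound n z hz,
    fun z hz => heven.of_nonneg_of_le (fun _ => norm_nonneg _) (fun _ => hbound _ z hz),
    fun z hz => hodd.of_nonneg_of_le (fun _ => norm_nonneg _) (fun _ => hbound _ z hz),
    tendstoUniformlyOn_tsum_nat heven (fun _ => hbound _),
    tendstoUniformlyOn_tsum_nat hodd (fun _ => hbound _)⟩

/-- Factorial bounds for the exact WKB recursion and absolute,
uniform convergence of the even and odd series on any compact convex `K ⊆ Ω`
containing the base point. -/
theorem wkb_series_converges
    (Ω : Set ℂ) (hΩopen : IsOpen Ω) (hΩbdd : Bornology.IsBounded Ω)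
    (hΩconv : Convex ℝ Ω)
    (H : ℂ → ℂ) (hH : DifferentiableOn ℂ H Ω) (hHbdd : ∃ M, ∀ ζ ∈ Ω, ‖H ζ‖ ≤ M)
    (z₀ : ℂ) (hz₀ : z₀ ∈ Ω) (ε : ℝ) (hε : 0 < ε) (s : ℂ) (hs : s = 1 ∨ s = -1)
    (K : Set ℂ) (hK : IsCompact K) (hKconv : Convex ℝ K) (hKΩ : K ⊆ Ω)
    (hz₀K : z₀ ∈ K)
    (L AK : ℝ) (hL : L = Metric.diam K)
    (hAK : AK = sSup ((fun ζ => ‖H ζ‖) '' K) * max 1 (Real.exp (2 * L / ε))) :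
    ∃ C : ℝ, 0 < C ∧
      (∀ n : ℕ, ∀ z ∈ K,
        ‖wkbW H z₀ ε s n z‖ ≤ C * (AK * L) ^ n / n.factorial) ∧
      (∀ z ∈ K, Summable (fun n : ℕ => ‖wkbW H z₀ ε s (2 * n) z‖)) ∧
      (∀ z ∈ K, Summable (fun n : ℕ => ‖wkbW H z₀ ε s (2 * n + 1) z‖)) ∧
      TendstoUniformlyOn
        (fun N z => ∑ n ∈ Finset.range N, wkbW H z₀ ε s (2 * n) z)
        (fun z => ∑' n : ℕ, wkbW H z₀ ε s (2 * n) z) atTop K ∧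
      TendstoUniformlyOn
        (fun N z => ∑ n ∈ Finset.range N, wkbW H z₀ ε s (2 * n + 1) z)
        (fun z => ∑' n : ℕ, wkbW H z₀ ε s (2 * n + 1) z) atTop K :=
  wkb_series_converges_general Ω H hH z₀ ε hε s hs K hK hKconv hKΩ hz₀K L AK hL hAK
end
end

section
/- In the exact WKB recursion with the + sign, fix z₁∈Ω with Re z₁ > Re z₀. Then for every N∈ℕ there exists a constant C_N > 0 such that for all ε∈(0,1]: |w⁺_even(z₁) − Σ_{n=0}^{N−1} w⁺_{2n}(z₁)| ≤ C_N ε^N and |w⁺_odd(z₁) − Σ_{n=0}^{N−1} w⁺_{2n+1}(z₁)| ≤ C_N ε^N. In particular w⁺_even(z₁) = 1 + O(ε) and w⁺_odd(z₁) = O(ε) as ε→0. -/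
/-!
Let `|ℋ| ≤ M` on the segment, parametrized by `ζ(t) = z₀ + t (z₁ - z₀)`, `t ∈ [0, 1]`. Because
`Re ζ(t)` increases with `t`, the kernel of an odd step has modulus
`|e^{2(ζ(s) - ζ(t))/ε}| = e^{-2 (t - s) Re (z₁ - z₀)/ε}` for `s ≤ t`, and its integral over
`[z₀, ζ(t)]` against `|dζ|` is at most `ε |z₁ - z₀| / (2 Re (z₁ - z₀))`. So each odd step gains
a factor `c ε` with `c = |z₁ - z₀| M / (2 Re (z₁ - z₀))`, while each even step is a plain Volterra
integration. By induction, with `A = |z₁ - z₀| M c`, `|w_{2n}(ζ(t))| ≤ (A ε t)ⁿ / n!` and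
`|w_{2n+1}(ζ(t))| ≤ c ε (A ε t)ⁿ / n!`, so beyond `N` terms both series are dominated by `ε^N`
times `A^N / N! · e^A`.
-/

open Complex Filter Set intervalIntegral

noncomputable section

open Nat in
theorem pow_add_div_factorial_le {x : ℝ} (hx : 0 ≤ x) (i N : ℕ) :
    x ^ (i + N) / (i + N)! ≤ x ^ N / N ! * (x ^ i / i !) := by
  have hfac : ((N ! * i ! : ℕ) : ℝ) ≤ (i + N)! := by
    rw [add_comm i N]
    exact_mod_cast Nat.le_of_dvd (Nat.factorial_pos _)
      (Nat.factorial_mul_factorial_dvd_factorial_add N i)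
  rw [_root_.div_mul_div_comm, ← pow_add, add_comm N i]
  push_cast at hfac
  gcongr

open Nat in
theorem norm_tsum_sub_sum_range_le_of_norm_le_pow_div_factorial {E : Type*}
    [NormedAddCommGroup E] [CompleteSpace E] {g : ℕ → E} {a b ε : ℝ}
    (ha : 0 ≤ a) (hε : 0 ≤ ε) (hε1 : ε ≤ 1) (hg : ∀ n, ‖g n‖ ≤ b * ((a * ε) ^ n / n !))
    (N : ℕ) :
    ‖∑' n, g n - ∑ n ∈ Finset.range N, g n‖ ≤ b * (a ^ N / N ! * Real.exp a) * ε ^ N := by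
  have hb : 0 ≤ b := by simpa using (norm_nonneg _).trans (hg 0)
  have hsum : Summable g :=
    .of_norm_bounded ((Real.summable_pow_div_factorial _).mul_left b) hg
  rw [← hsum.sum_add_tsum_nat_add N, add_sub_cancel_left]
  have hexp : HasSum (fun i : ℕ => b * (a ^ N / N ! * ε ^ N) * (a ^ i / i !))
      (b * (a ^ N / N ! * ε ^ N) * Real.exp a) := by
    rw [Real.exp_eq_exp_ℝ]
    exact (NormedSpace.expSeries_div_hasSum_exp a).mul_left _
  calc ‖∑' i, g (i + N)‖ ≤ b * (a ^ N / N ! * ε ^ N) * Real.exp a := by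
        refine tsum_of_norm_bounded hexp fun i => (hg (i + N)).trans ?_
        rw [mul_assoc b]
        gcongr b * ?_
        calc (a * ε) ^ (i + N) / (i + N)! ≤ (a * ε) ^ N / N ! * ((a * ε) ^ i / i !) :=
              pow_add_div_factorial_le (by positivity) i N
          _ ≤ a ^ N / N ! * ε ^ N * (a ^ i / i !) := by
              rw [mul_pow, mul_pow, mul_div_right_comm]
              gcongr
              exact mul_le_of_le_one_right (by positivity) (pow_le_one₀ hε hε1)
    _ = b * (a ^ N / N ! * Real.exp a) * ε ^ N := by ring

theorem mul_integral_exp_mul_sub_one_le {k : ℝ} (hk : 0 < k) (t : ℝ) :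
    t * ∫ u in (0:ℝ)..1, Real.exp (k * t * (u - 1)) ≤ 1 / k := by
  have hderiv : ∀ u ∈ uIcc (0:ℝ) 1,
      HasDerivAt (fun u => Real.exp (k * t * (u - 1)) / k) (t * Real.exp (k * t * (u - 1))) u :=
    fun u _ => ((((hasDerivAt_id u).sub_const 1).const_mul (k * t)).exp.div_const k).congr_deriv
      (by field_simp; simp)
  rw [← intervalIntegral.integral_const_mul,
    integral_eq_sub_of_hasDerivAt hderiv ((by fun_prop : Continuous _).intervalIntegrable 0 1)]
  have := div_pos (Real.exp_pos (k * t * (0 - 1))) hk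
  simp only [sub_self, mul_zero, Real.exp_zero]
  linarith

theorem wkbW_two_mul_add_one (H : ℂ → ℂ) (z₀ : ℂ) (ε : ℝ) (σ : ℂ) (n : ℕ) (z : ℂ) :
    wkbW H z₀ ε σ (2 * n + 1) z = (z - z₀) * ∫ t in (0:ℝ)..1,
      Complex.exp (σ * 2 * ((z₀ + (t : ℂ) * (z - z₀)) - z) / (ε : ℂ)) *
        H (z₀ + (t : ℂ) * (z - z₀)) * wkbW H z₀ ε σ (2 * n) (z₀ + (t : ℂ) * (z - z₀)) := by
  simp [wkbW]

theorem wkbW_two_mul_add_two (H : ℂ → ℂ) (z₀ : ℂ) (ε : ℝ) (σ : ℂ) (n : ℕ) (z : ℂ) :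
    wkbW H z₀ ε σ (2 * n + 2) z = (z - z₀) * ∫ t in (0:ℝ)..1,
      H (z₀ + (t : ℂ) * (z - z₀)) * wkbW H z₀ ε σ (2 * n + 1) (z₀ + (t : ℂ) * (z - z₀)) := by
  simp [wkbW, Nat.add_mod]

section Segment

variable {H : ℂ → ℂ} {z₀ z₁ : ℂ} {M ε : ℝ}

theorem add_mul_add_mul_sub_sub (u t : ℝ) :
    z₀ + (u : ℂ) * (z₀ + (t : ℂ) * (z₁ - z₀) - z₀) = z₀ + ((u * t : ℝ) : ℂ) * (z₁ - z₀) := by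
  push_cast
  ring

theorem norm_add_mul_sub_sub {t : ℝ} (ht : 0 ≤ t) :
    ‖z₀ + (t : ℂ) * (z₁ - z₀) - z₀‖ = t * ‖z₁ - z₀‖ := by
  rw [add_sub_cancel_left, norm_mul, Complex.norm_real, Real.norm_of_nonneg ht]

theorem mul_mem_Icc_zero_of_mem_Icc {u t : ℝ} (hu : u ∈ Icc (0:ℝ) 1) (ht : 0 ≤ t) :
    u * t ∈ Icc 0 t :=
  ⟨mul_nonneg hu.1 ht, mul_le_of_le_one_left ht hu.2⟩

def wkbGain (z₀ z₁ : ℂ) (M : ℝ) : ℝ := ‖z₁ - z₀‖ * M / (2 * (z₁ - z₀).re)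

theorem norm_wkbW_two_mul_add_one_le (hprog : z₀.re < z₁.re) (hε : 0 < ε)
    (hH : ∀ s ∈ Icc (0:ℝ) 1, ‖H (z₀ + s * (z₁ - z₀))‖ ≤ M) {n : ℕ} {t P : ℝ} (ht : t ∈ Icc (0:ℝ) 1)
    (hP : ∀ s ∈ Icc 0 t, ‖wkbW H z₀ ε 1 (2 * n) (z₀ + s * (z₁ - z₀))‖ ≤ P) :
    ‖wkbW H z₀ ε 1 (2 * n + 1) (z₀ + t * (z₁ - z₀))‖ ≤ wkbGain z₀ z₁ M * ε * P := by
  set k := 2 * (z₁ - z₀).re / ε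
  have hk : 0 < k := div_pos (by simp [hprog]) hε
  have hM : 0 ≤ M := (norm_nonneg _).trans (hH 0 ⟨le_rfl, zero_le_one⟩)
  have hP0 : 0 ≤ P := (norm_nonneg _).trans (hP 0 ⟨le_rfl, ht.1⟩)
  rw [wkbW_two_mul_add_one, norm_mul, norm_add_mul_sub_sub ht.1]
  simp_rw [add_mul_add_mul_sub_sub]
  have hbound : ∀ u ∈ Ioc (0:ℝ) 1,
      ‖Complex.exp (1 * 2 * (z₀ + ((u * t : ℝ) : ℂ) * (z₁ - z₀) - (z₀ + t * (z₁ - z₀))) / ε) *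
        H (z₀ + ((u * t : ℝ) : ℂ) * (z₁ - z₀)) *
        wkbW H z₀ ε 1 (2 * n) (z₀ + ((u * t : ℝ) : ℂ) * (z₁ - z₀))‖ ≤
      Real.exp (k * t * (u - 1)) * M * P := by
    intro u hu
    have hs := mul_mem_Icc_zero_of_mem_Icc (Ioc_subset_Icc_self hu) ht.1
    have hexp : ‖Complex.exp (1 * 2 * (z₀ + ((u * t : ℝ) : ℂ) * (z₁ - z₀) -
        (z₀ + t * (z₁ - z₀))) / ε)‖ = Real.exp (k * t * (u - 1)) := by
      rw [Complex.norm_exp]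
      congr 1
      simp [k]
      field_simp
    rw [norm_mul, norm_mul, hexp]
    gcongr
    · exact hH _ ⟨hs.1, hs.2.trans ht.2⟩
    · exact hP _ hs
  calc t * ‖z₁ - z₀‖ * ‖∫ u in (0:ℝ)..1, _‖
      ≤ t * ‖z₁ - z₀‖ * ∫ u in (0:ℝ)..1, Real.exp (k * t * (u - 1)) * M * P := by
        refine mul_le_mul_of_nonneg_left ?_ (mul_nonneg ht.1 (norm_nonneg _))
        exact intervalIntegral.norm_integral_le_of_norm_le zero_le_one
          (.of_forall hbound) ((by fun_prop : Continuous _).intervalIntegrable 0 1)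
    _ = ‖z₁ - z₀‖ * M * P * (t * ∫ u in (0:ℝ)..1, Real.exp (k * t * (u - 1))) := by
        simp only [intervalIntegral.integral_mul_const]
        ring
    _ ≤ ‖z₁ - z₀‖ * M * P * (1 / k) := by
        gcongr
        exact mul_integral_exp_mul_sub_one_le hk t
    _ = wkbGain z₀ z₁ M * ε * P := by
        simp only [k, wkbGain]
        field_simp

theorem norm_wkbW_two_mul_add_two_le (σ : ℂ)
    (hH : ∀ s ∈ Icc (0:ℝ) 1, ‖H (z₀ + s * (z₁ - z₀))‖ ≤ M) {n : ℕ} {t K : ℝ} (ht : t ∈ Icc (0:ℝ) 1)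
    (hK : ∀ s ∈ Icc 0 t, ‖wkbW H z₀ ε σ (2 * n + 1) (z₀ + s * (z₁ - z₀))‖ ≤ K * s ^ n) :
    ‖wkbW H z₀ ε σ (2 * n + 2) (z₀ + t * (z₁ - z₀))‖ ≤
      ‖z₁ - z₀‖ * M * K * t ^ (n + 1) / (n + 1) := by
  have hM : 0 ≤ M := (norm_nonneg _).trans (hH 0 ⟨le_rfl, zero_le_one⟩)
  rw [wkbW_two_mul_add_two, norm_mul, norm_add_mul_sub_sub ht.1]
  simp_rw [add_mul_add_mul_sub_sub]
  have hbound : ∀ u ∈ Ioc (0:ℝ) 1,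
      ‖H (z₀ + ((u * t : ℝ) : ℂ) * (z₁ - z₀)) *
        wkbW H z₀ ε σ (2 * n + 1) (z₀ + ((u * t : ℝ) : ℂ) * (z₁ - z₀))‖ ≤
      M * (K * (u * t) ^ n) := by
    intro u hu
    have hs := mul_mem_Icc_zero_of_mem_Icc (Ioc_subset_Icc_self hu) ht.1
    rw [norm_mul]
    gcongr
    · exact hH _ ⟨hs.1, hs.2.trans ht.2⟩
    · exact hK _ hs
  calc t * ‖z₁ - z₀‖ * ‖∫ u in (0:ℝ)..1, _‖
      ≤ t * ‖z₁ - z₀‖ * ∫ u in (0:ℝ)..1, M * (K * (u * t) ^ n) := by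
        refine mul_le_mul_of_nonneg_left ?_ (mul_nonneg ht.1 (norm_nonneg _))
        exact intervalIntegral.norm_integral_le_of_norm_le zero_le_one
          (.of_forall hbound) ((by fun_prop : Continuous _).intervalIntegrable 0 1)
    _ = ‖z₁ - z₀‖ * M * K * t ^ (n + 1) / (n + 1) := by
        simp only [mul_pow, intervalIntegral.integral_const_mul,
          intervalIntegral.integral_mul_const, integral_pow]
        field_simp
        ring

open Nat in
theorem norm_wkbW_le_s14 (hprog : z₀.re < z₁.re) (hε : 0 < ε)
    (hH : ∀ s ∈ Icc (0:ℝ) 1, ‖H (z₀ + s * (z₁ - z₀))‖ ≤ M) (n : ℕ) {t : ℝ} (ht : t ∈ Icc (0:ℝ) 1) :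
    ‖wkbW H z₀ ε 1 (2 * n) (z₀ + t * (z₁ - z₀))‖ ≤
      (‖z₁ - z₀‖ * M * wkbGain z₀ z₁ M * ε * t) ^ n / n ! ∧
    ‖wkbW H z₀ ε 1 (2 * n + 1) (z₀ + t * (z₁ - z₀))‖ ≤
      wkbGain z₀ z₁ M * ε * ((‖z₁ - z₀‖ * M * wkbGain z₀ z₁ M * ε * t) ^ n / n !) := by
  set c := wkbGain z₀ z₁ M
  set A := ‖z₁ - z₀‖ * M * c
  have hM : 0 ≤ M := (norm_nonneg _).trans (hH 0 ⟨le_rfl, zero_le_one⟩)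
  have hc : 0 ≤ c := div_nonneg (by positivity) (by simp [hprog.le])
  have hAε : 0 ≤ A * ε := by positivity
  have odd_of_even : ∀ (n : ℕ) {t : ℝ}, t ∈ Icc (0:ℝ) 1 → (∀ s ∈ Icc (0:ℝ) 1,
      ‖wkbW H z₀ ε 1 (2 * n) (z₀ + s * (z₁ - z₀))‖ ≤ (A * ε * s) ^ n / n !) →
      ‖wkbW H z₀ ε 1 (2 * n + 1) (z₀ + t * (z₁ - z₀))‖ ≤ c * ε * ((A * ε * t) ^ n / n !) :=
    fun n t ht heven => norm_wkbW_two_mul_add_one_le hprog hε hH ht fun s hs =>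
      (heven s ⟨hs.1, hs.2.trans ht.2⟩).trans (by gcongr; exacts [mul_nonneg hAε hs.1, hs.2])
  induction n generalizing t with
  | zero => exact ⟨by simp [wkbW], odd_of_even 0 ht fun s _ => by simp [wkbW]⟩
  | succ n ih =>
    have heven : ∀ s ∈ Icc (0:ℝ) 1,
        ‖wkbW H z₀ ε 1 (2 * (n + 1)) (z₀ + s * (z₁ - z₀))‖ ≤ (A * ε * s) ^ (n + 1) / (n + 1)! :=
      fun s hs => (norm_wkbW_two_mul_add_two_le 1 hH hs (K := c * ε * ((A * ε) ^ n / n !))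
        fun r hr => (ih ⟨hr.1, hr.2.trans hs.2⟩).2.trans_eq (by ring)).trans_eq
          (by rw [factorial_succ]; push_cast; simp only [A]; field_simp; ring)
    exact ⟨heven t ht, odd_of_even (n + 1) ht heven⟩

end Segment

theorem wkb_asymptotic_expansion_general
    (Ω : Set ℂ)
    (hΩconv : Convex ℝ Ω)
    (H : ℂ → ℂ)
    (hHbdd : ∃ M, ∀ ζ ∈ Ω, ‖H ζ‖ ≤ M)
    (z₀ z₁ : ℂ) (hz₀ : z₀ ∈ Ω) (hz₁ : z₁ ∈ Ω) (hprog : z₀.re < z₁.re) :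
    ∀ N : ℕ, ∃ C : ℝ, 0 < C ∧
      ∀ ε : ℝ, 0 < ε → ε ≤ 1 →
        ‖(∑' n : ℕ, wkbW H z₀ ε 1 (2 * n) z₁) -
            ∑ n ∈ Finset.range N, wkbW H z₀ ε 1 (2 * n) z₁‖ ≤ C * ε ^ N ∧
        ‖(∑' n : ℕ, wkbW H z₀ ε 1 (2 * n + 1) z₁) -
            ∑ n ∈ Finset.range N, wkbW H z₀ ε 1 (2 * n + 1) z₁‖ ≤ C * ε ^ N := by
  intro N
  obtain ⟨M₀, hM₀⟩ := hHbdd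
  set M := max M₀ 1
  have hH : ∀ s ∈ Icc (0:ℝ) 1, ‖H (z₀ + s * (z₁ - z₀))‖ ≤ M := fun s hs =>
    (hM₀ _ (by simpa using hΩconv.add_smul_sub_mem hz₀ hz₁ hs)).trans (le_max_left _ _)
  set c := wkbGain z₀ z₁ M
  set A := ‖z₁ - z₀‖ * M * c
  have hδ : 0 < (z₁ - z₀).re := by simp [hprog]
  have hL : 0 < ‖z₁ - z₀‖ := hδ.trans_le (Complex.re_le_norm _)
  have hM : 0 < M := lt_max_of_lt_right one_pos
  have hc : 0 < c := by simp only [c, wkbGain]; positivity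
  have hA : 0 < A := by positivity
  refine ⟨(1 + c) * (A ^ N / N.factorial * Real.exp A), by positivity, fun ε hε hε1 => ?_⟩
  have hend : z₀ + ((1:ℝ):ℂ) * (z₁ - z₀) = z₁ := by simp
  have hbound n := hend ▸ norm_wkbW_le_s14 hprog hε hH n ⟨zero_le_one, le_rfl⟩
  constructor
  · refine (norm_tsum_sub_sum_range_le_of_norm_le_pow_div_factorial (b := 1) hA.le hε.le hε1
      (fun n => by simpa using (hbound n).1) N).trans ?_
    gcongr
    linarith
  · refine (norm_tsum_sub_sum_range_le_of_norm_le_pow_div_factorial (b := c) hA.le hε.le hε1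
      (fun n => (hbound n).2.trans ?_) N).trans ?_
    · simp only [mul_one]
      gcongr
      exact mul_le_of_le_one_right hc.le hε1
    · gcongr
      linarith

/-- Along a progressive segment (`Re z₁ > Re z₀`), the even and
odd sums of the exact WKB recursion (sign `+`, i.e. `s = 1`) have complete
asymptotic expansions: for each `N` the tail beyond the first `N` terms is
`O(ε^N)` uniformly in `ε ∈ (0,1]`; in particular `w⁺_even(z₁) = 1 + O(ε)` and
`w⁺_odd(z₁) = O(ε)`. -/
theorem wkb_asymptotic_expansion
    (Ω : Set ℂ) (hΩopen : IsOpen Ω) (hΩbdd : Bornology.IsBounded Ω)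
    (hΩconv : Convex ℝ Ω)
    (H : ℂ → ℂ) (hH : DifferentiableOn ℂ H Ω)
    (hHbdd : ∃ M, ∀ ζ ∈ Ω, ‖H ζ‖ ≤ M)
    (z₀ z₁ : ℂ) (hz₀ : z₀ ∈ Ω) (hz₁ : z₁ ∈ Ω) (hprog : z₀.re < z₁.re) :
    ∀ N : ℕ, ∃ C : ℝ, 0 < C ∧
      ∀ ε : ℝ, 0 < ε → ε ≤ 1 →
        ‖(∑' n : ℕ, wkbW H z₀ ε 1 (2 * n) z₁) -
            ∑ n ∈ Finset.range N, wkbW H z₀ ε 1 (2 * n) z₁‖ ≤ C * ε ^ N ∧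
        ‖(∑' n : ℕ, wkbW H z₀ ε 1 (2 * n + 1) z₁) -
            ∑ n ∈ Finset.range N, wkbW H z₀ ε 1 (2 * n + 1) z₁‖ ≤ C * ε ^ N :=
  wkb_asymptotic_expansion_general Ω hΩconv H hHbdd z₀ z₁ hz₀ hz₁ hprog
end
end

section
/- Let N ∈ ℕ, let λ₁,…,λ_N and λ'₁,…,λ'_N be complex numbers, let λ ∈ ℂ, and let r > 0 and η ≥ 0 satisfy |λ_n − λ'_n| ≤ η for all n and |λ − λ_n| ≥ r, |λ − conj(λ_n)| ≥ r, |λ − λ'_n| ≥ r, |λ − conj(λ'_n)| ≥ r for all n. Then the ratio of the two Blaschke-type products satisfies | Π_{n=1}^{N} [ (λ − conj(λ_n))(λ − λ'_n) ] / [ (λ − λ_n)(λ − conj(λ'_n)) ] − 1 | ≤ (2Nη/r) e^{2Nη/r}. In particular, if N = O(1/ε), η = o(ε) and r is bounded below independently of ε, then Π_{n}(λ−conj(λ_n))/(λ−λ_n) = Π_{n}(λ−conj(λ'_n))/(λ−λ'_n) · (1+o(1)) as ε→0. -/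
open Complex Finset ComplexConjugate

/-! Split each factor of the ratio as `u_n v_n` with `u_n = (λ - conj λ_n)/(λ - conj λ'_n)`
and `v_n = (λ - λ'_n)/(λ - λ_n)`; both lie within `η/r` of `1`. The product of these `2N` numbers
differs from `1` by at most `exp (2Nη/r) - 1 ≤ (2Nη/r) exp (2Nη/r)`. -/

lemma norm_div_sub_one_le {𝕜 : Type*} [NormedField 𝕜] {z a b : 𝕜} {r η : ℝ} (hr : 0 < r)
    (hab : ‖a - b‖ ≤ η) (hb : r ≤ ‖z - b‖) : ‖(z - a) / (z - b) - 1‖ ≤ η / r := by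
  have hzb : z - b ≠ 0 := norm_pos_iff.mp (hr.trans_le hb)
  rw [div_sub_one hzb, sub_sub_sub_cancel_left, norm_div, norm_sub_rev]
  exact div_le_div₀ ((norm_nonneg _).trans hab) hab hr hb

lemma Finset.norm_prod_sub_one_le {ι R : Type*} [NormedCommRing R] [NormOneClass R]
    (s : Finset ι) (a : ι → R) :
    ‖∏ i ∈ s, a i - 1‖ ≤ Real.exp (∑ i ∈ s, ‖a i - 1‖) - 1 := by
  simpa using s.norm_prod_one_add_sub_one_le (fun i => a i - 1)

lemma Real.exp_sub_one_le_mul_exp (x : ℝ) : Real.exp x - 1 ≤ x * Real.exp x := by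
  have h := mul_le_mul_of_nonneg_right (Real.one_sub_le_exp_neg x) (Real.exp_pos x).le
  rw [← Real.exp_add, neg_add_cancel, Real.exp_zero] at h
  linarith

theorem blaschke_product_perturbation_general
    (N : ℕ) (lam' lam'' : Fin N → ℂ) (lam : ℂ) (r η : ℝ)
    (hr : 0 < r)
    (hclose : ∀ n : Fin N, ‖lam' n - lam'' n‖ ≤ η)
    (hsep : ∀ n : Fin N,
      r ≤ ‖lam - lam' n‖ ∧
      r ≤ ‖lam - (starRingEnd ℂ) (lam' n)‖ ∧
      r ≤ ‖lam - lam'' n‖ ∧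
      r ≤ ‖lam - (starRingEnd ℂ) (lam'' n)‖) :
    ‖(∏ n : Fin N,
          ((lam - (starRingEnd ℂ) (lam' n)) * (lam - lam'' n)) /
            ((lam - lam' n) * (lam - (starRingEnd ℂ) (lam'' n)))) - 1‖ ≤
      (2 * N * η / r) * Real.exp (2 * N * η / r) := by
  set u : Fin N → ℂ := fun n => (lam - conj (lam' n)) / (lam - conj (lam'' n))
  set v : Fin N → ℂ := fun n => (lam - lam'' n) / (lam - lam' n)
  have hu : ∀ n, ‖u n - 1‖ ≤ η / r := fun n =>
    norm_div_sub_one_le hr (by rw [← map_sub, norm_conj]; exact hclose n) (hsep n).2.2.2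
  have hv : ∀ n, ‖v n - 1‖ ≤ η / r := fun n =>
    norm_div_sub_one_le hr (by rw [norm_sub_rev]; exact hclose n) (hsep n).1
  have hsum : ∑ i : Fin N ⊕ Fin N, ‖Sum.elim u v i - 1‖ ≤ 2 * N * η / r := by
    rw [Fintype.sum_sum_type]
    calc ∑ n, ‖u n - 1‖ + ∑ n, ‖v n - 1‖
        ≤ ∑ _n : Fin N, η / r + ∑ _n : Fin N, η / r :=
          add_le_add (sum_le_sum fun n _ => hu n) (sum_le_sum fun n _ => hv n)
      _ = 2 * N * η / r := by
          simp only [sum_const, card_univ, Fintype.card_fin, nsmul_eq_mul]; ring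
  calc _ = ‖∏ i : Fin N ⊕ Fin N, Sum.elim u v i - 1‖ := by
        rw [Fintype.prod_sum_type, ← prod_mul_distrib]
        simp only [Sum.elim_inl, Sum.elim_inr, u, v, ← mul_div_mul_comm, mul_comm (lam - lam' _)]
    _ ≤ Real.exp (∑ i : Fin N ⊕ Fin N, ‖Sum.elim u v i - 1‖) - 1 :=
        univ.norm_prod_sub_one_le _
    _ ≤ Real.exp (2 * N * η / r) - 1 := by gcongr
    _ ≤ _ := Real.exp_sub_one_le_mul_exp _

/-- Perturbation estimate for Blaschke-type products: if
`|λ_n - λ'_n| ≤ η` and `λ` keeps distance `≥ r` from all `λ_n`, `conj λ_n`,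
`λ'_n`, `conj λ'_n`, then the ratio of the two Blaschke products differs from
`1` by at most `(2Nη/r) e^{2Nη/r}`. -/
theorem blaschke_product_perturbation
    (N : ℕ) (lam' lam'' : Fin N → ℂ) (lam : ℂ) (r η : ℝ)
    (hr : 0 < r) (hη : 0 ≤ η)
    (hclose : ∀ n : Fin N, ‖lam' n - lam'' n‖ ≤ η)
    (hsep : ∀ n : Fin N,
      r ≤ ‖lam - lam' n‖ ∧
      r ≤ ‖lam - (starRingEnd ℂ) (lam' n)‖ ∧
      r ≤ ‖lam - lam'' n‖ ∧
      r ≤ ‖lam - (starRingEnd ℂ) (lam'' n)‖) :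
    ‖(∏ n : Fin N,
          ((lam - (starRingEnd ℂ) (lam' n)) * (lam - lam'' n)) /
            ((lam - lam' n) * (lam - (starRingEnd ℂ) (lam'' n)))) - 1‖ ≤
      (2 * N * η / r) * Real.exp (2 * N * η / r) :=
  blaschke_product_perturbation_general N lam' lam'' lam r η hr hclose hsep
end
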